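/- arXiv:1409.3948 — 3 statements merged into one kernel-verified Lean document; each statement's English description precedes it below -/
import Mathlib

section
/- Any two continued fraction expansions of the same positive rational number have the same length: if [a_1, …, a_n] = [b_1, …, b_m] as rational numbers, then a_1 + ⋯ + a_n = b_1 + ⋯ + b_m. -/
namespace ResolutionGraph

/-- The value of the continued fraction `[a₁, …, aₙ] = a₁ + 1/[a₂, …, aₙ]`. -/
def cfVal : List ℕ → ℚ
  | [] => 0
  | [a] => (a : ℚ)
  | a :: b :: rest => (a : ℚ) + 1 / cfVal (b :: rest)

/-- `L = (a₁, …, aₙ)` is a continued fraction expansion of `q`: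
`n ≥ 1`, `a₁ ≥ 0`, `a₂, …, aₙ ≥ 1` and `[a₁, …, aₙ] = q`. -/
def IsExpansion (L : List ℕ) (q : ℚ) : Prop :=
  L ≠ [] ∧ (∀ x ∈ L.tail, 1 ≤ x) ∧ cfVal L = q

/-- `q` has length `m`, i.e. some expansion `(a₁, …, aₙ)` of `q` satisfies `a₁ + ⋯ + aₙ = m`. -/
def HasLen (q : ℚ) (m : ℕ) : Prop :=
  ∃ L : List ℕ, IsExpansion L q ∧ L.sum = m

/-- `α ∼ β` : one of them has an expansion `[a₁, …, a_k]` and the other equals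
`[a₁, …, a_k, n]` for some integer `n ≥ 1`. -/
def Related (α β : ℚ) : Prop :=
  (∃ (L : List ℕ) (n : ℕ), 1 ≤ n ∧ IsExpansion L α ∧ cfVal (L ++ [n]) = β) ∨
  (∃ (L : List ℕ) (n : ℕ), 1 ≤ n ∧ IsExpansion L β ∧ cfVal (L ++ [n]) = α)

/-- `γ` is the value of the convolution `α ∗ β`, computed from a witness of `α ∼ β`:
for an expansion `[a₁, …, a_k]` of one of them with the other equal to `[a₁, …, a_k, n]`
(`n ≥ 1` an integer), `γ = [a₁, …, a_k, n + 1]`. -/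
def ConvWitness (α β γ : ℚ) : Prop :=
  ∃ (L : List ℕ) (n : ℕ), 1 ≤ n ∧
    ((IsExpansion L α ∧ cfVal (L ++ [n]) = β) ∨ (IsExpansion L β ∧ cfVal (L ++ [n]) = α)) ∧
    cfVal (L ++ [n + 1]) = γ

/-- `α ≺ β` : `β` has an expansion `[a₁, …, a_k]` and `α = [a₁, …, a_ℓ, b]` for some
`0 ≤ ℓ ≤ k − 1` and `1 ≤ b ≤ a_{ℓ+1}`. -/
def Precedes (α β : ℚ) : Prop :=
  ∃ L : List ℕ, IsExpansion L β ∧ ∃ ℓ : ℕ, ∃ h : ℓ < L.length, ∃ b : ℕ,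
    1 ≤ b ∧ b ≤ L.get ⟨ℓ, h⟩ ∧ cfVal (L.take ℓ ++ [b]) = α

/-- `α` immediately precedes `β` : `α ≺ β` and `|β| = |α| + 1`. -/
def ImmediatelyPrecedes (α β : ℚ) : Prop :=
  Precedes α β ∧ ∃ a : ℕ, HasLen α a ∧ HasLen β (a + 1)

lemma cfVal_cons (a : ℕ) (R : List ℕ) (h : R ≠ []) :
    cfVal (a :: R) = (a : ℚ) + 1 / cfVal R := by
  cases R with
  | nil => exact absurd rfl h
  | cons b t => rfl

lemma one_le_cfVal : ∀ L : List ℕ, L ≠ [] → (∀ x ∈ L, 1 ≤ x) → 1 ≤ cfVal L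
  | [], h, _ => absurd rfl h
  | [a], _, h1 => by
      have := h1 a (by simp)
      simp only [cfVal]
      exact_mod_cast this
  | a :: b :: t, _, h1 => by
      have ih : 1 ≤ cfVal (b :: t) :=
        one_le_cfVal (b :: t) (by simp) (fun x hx => h1 x (by simp [hx]))
      have ha : (1 : ℚ) ≤ a := by exact_mod_cast h1 a (by simp)
      have hpos : 0 < 1 / cfVal (b :: t) := by positivity
      show (a : ℚ) + 1 / cfVal (b :: t) ≥ 1
      linarith

lemma eq_one_of_cfVal_eq_one : ∀ L : List ℕ, L ≠ [] → (∀ x ∈ L, 1 ≤ x) →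
    cfVal L = 1 → L = [1]
  | [], h, _, _ => absurd rfl h
  | [a], _, _, hv => by
      have : (a : ℚ) = 1 := hv
      have : a = 1 := by exact_mod_cast this
      simp [this]
  | a :: b :: t, _, h1, hv => by
      have ih : 1 ≤ cfVal (b :: t) :=
        one_le_cfVal (b :: t) (by simp) (fun x hx => h1 x (by simp [hx]))
      have ha : (1 : ℚ) ≤ a := by exact_mod_cast h1 a (by simp)
      have hpos : 0 < 1 / cfVal (b :: t) := by positivity
      have : cfVal (a :: b :: t) = (a : ℚ) + 1 / cfVal (b :: t) := rfl
      rw [this] at hv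
      linarith

lemma sum_eq_of_int (q : ℚ) (hq : 0 < q) (hden : q.den = 1) :
    ∀ L : List ℕ, IsExpansion L q → (L.sum : ℚ) = q
  | [], h => absurd rfl h.1
  | [a], h => by simpa [cfVal] using h.2.2
  | a :: b :: t, h => by
      obtain ⟨-, htail, hval⟩ := h
      have hRall : ∀ x ∈ b :: t, 1 ≤ x := fun x hx => htail x (by simpa using hx)
      have hr1 : 1 ≤ cfVal (b :: t) := one_le_cfVal _ (by simp) hRall
      have hrpos : (0:ℚ) < cfVal (b :: t) := lt_of_lt_of_le one_pos hr1
      have hval' : (a : ℚ) + 1 / cfVal (b :: t) = q := hval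
      have hqa : q - (a:ℚ) = 1 / cfVal (b :: t) := by linarith
      have h0 : 0 < q - (a:ℚ) := by rw [hqa]; positivity
      have h1' : q - (a:ℚ) ≤ 1 := by
        rw [hqa, div_le_one hrpos]; exact hr1
      have hn : ((q.num : ℚ)) = q := Rat.coe_int_num_of_den_eq_one hden
      have h0' : (0:ℤ) < q.num - a := by
        have : ((0:ℤ):ℚ) < ((q.num - a : ℤ) : ℚ) := by push_cast; linarith
        exact_mod_cast this
      have h1'' : q.num - (a:ℤ) ≤ 1 := by
        have : ((q.num - a : ℤ) : ℚ) ≤ ((1:ℤ):ℚ) := by push_cast; linarith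
        exact_mod_cast this
      have hz : q.num - (a:ℤ) = 1 := le_antisymm h1'' h0'
      have hzq : (q.num:ℚ) - a = 1 := by exact_mod_cast hz
      have hcf1 : cfVal (b :: t) = 1 := by
        have h2 : q - (a:ℚ) = 1 := by linarith
        rw [h2] at hqa
        field_simp at hqa
        linarith
      have hR1 : b :: t = [1] := eq_one_of_cfVal_eq_one _ (by simp) hRall hcf1
      obtain ⟨hb, ht⟩ := List.cons_eq_cons.mp hR1
      subst hb; subst ht
      simp only [List.sum_cons, List.sum_nil]
      push_cast
      linarith

lemma peel (q : ℚ) (hden : q.den ≠ 1) :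
    ∀ L : List ℕ, IsExpansion L q →
      ∃ R : List ℕ, L = ⌊q⌋.toNat :: R ∧ IsExpansion R (1 / (q - ⌊q⌋))
  | [], h => absurd rfl h.1
  | [a], h => by
      have : (a : ℚ) = q := h.2.2
      exact absurd (by rw [← this]; simp) hden
  | a :: b :: t, h => by
      obtain ⟨-, htail, hval⟩ := h
      set R := b :: t with hR
      have hRall : ∀ x ∈ R, 1 ≤ x := fun x hx => htail x (by simpa using hx)
      have hr1 : 1 ≤ cfVal R := one_le_cfVal R (by simp [hR]) hRall
      have hrpos : (0:ℚ) < cfVal R := lt_of_lt_of_le one_pos hr1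
      have hval' : (a : ℚ) + 1 / cfVal R = q := hval
      have hqa : q - (a:ℚ) = 1 / cfVal R := by linarith
      have h0 : 0 < q - (a:ℚ) := by rw [hqa]; positivity
      have h1' : q - (a:ℚ) ≤ 1 := by rw [hqa, div_le_one hrpos]; exact hr1
      have hne : q - (a:ℚ) ≠ 1 := by
        intro hcontra
        have : q = (a:ℚ) + 1 := by linarith
        apply hden
        rw [this]
        have : ((a:ℚ) + 1) = ((a + 1 : ℕ) : ℚ) := by push_cast; ring
        rw [this, Rat.den_natCast]
      have hlt : q - (a:ℚ) < 1 := lt_of_le_of_ne h1' hne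
      have hfloor : ⌊q⌋ = (a : ℤ) := by
        rw [Int.floor_eq_iff]
        constructor
        · push_cast; linarith
        · push_cast; linarith
      refine ⟨R, ?_, ?_, ?_, ?_⟩
      · rw [hfloor]; simp
      · simp [hR]
      · exact fun x hx => hRall x (List.mem_of_mem_tail hx)
      · rw [hfloor]
        push_cast
        rw [hqa]
        rw [one_div_one_div]

lemma main_aux : ∀ s : ℕ, ∀ q : ℚ, 0 < q → ∀ L M : List ℕ,
    L.sum + L.length ≤ s → IsExpansion L q → IsExpansion M q → L.sum = M.sum := by
  intro s
  induction s with
  | zero =>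
      intro q hq L M hs hL hM
      cases L with
      | nil => exact absurd rfl hL.1
      | cons a t => simp at hs
  | succ n ih =>
      intro q hq L M hs hL hM
      by_cases hden : q.den = 1
      · have h1 := sum_eq_of_int q hq hden L hL
        have h2 := sum_eq_of_int q hq hden M hM
        exact_mod_cast h1.trans h2.symm
      · obtain ⟨RL, hLe, hRL⟩ := peel q hden L hL
        obtain ⟨RM, hMe, hRM⟩ := peel q hden M hM
        have hfr0 : 0 < q - ⌊q⌋ := by
          have := Int.floor_le q
          rcases lt_or_eq_of_le this with h | h
          · linarith
          · exfalso; apply hden; rw [← h]; simp [Rat.den_intCast]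
        have hq' : 0 < 1 / (q - ⌊q⌋) := by positivity
        have hmeas : RL.sum + RL.length ≤ n := by
          subst hLe
          simp only [List.sum_cons, List.length_cons] at hs
          omega
        have := ih (1 / (q - ⌊q⌋)) hq' RL RM hmeas hRL hRM
        subst hLe; subst hMe
        simp [this]

/-- Any two continued fraction expansions of the same positive rational number
have the same length: if `[a₁, …, aₙ] = [b₁, …, b_m]` as rational numbers, then
`a₁ + ⋯ + aₙ = b₁ + ⋯ + b_m`. -/
theorem length_well_defined (q : ℚ) (hq : 0 < q) (L M : List ℕ)
    (hL : IsExpansion L q) (hM : IsExpansion M q) :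
    L.sum = M.sum :=
  main_aux (L.sum + L.length) q hq L M le_rfl hL hM

end ResolutionGraph
end

section
/- If α and β are related positive rationals with α < β, then α < α ∗ β < β. -/
namespace ResolutionGraph

/-- Continued fraction with a rational tail value. -/
def cfA : List ℕ → ℚ → ℚ
  | [], x => x
  | a :: rest, x => (a : ℚ) + 1 / cfA rest x

lemma cfA_eq (L : List ℕ) (n : ℕ) : cfVal (L ++ [n]) = cfA L (n : ℚ) := by
  induction L with
  | nil => simp [cfVal, cfA]
  | cons a rest ih =>
    cases rest with
    | nil => simp [cfVal, cfA]
    | cons b r =>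
      show cfVal (a :: (b :: r ++ [n])) = _
      rw [show cfVal (a :: (b :: r ++ [n])) = (a : ℚ) + 1 / cfVal (b :: r ++ [n]) from rfl]
      rw [show (b :: r ++ [n] : List ℕ) = (b :: r) ++ [n] from rfl, ih]
      rfl

lemma cfVal_one_le (L : List ℕ) (hL : L ≠ []) (h : ∀ x ∈ L, 1 ≤ x) : 1 ≤ cfVal L := by
  induction L with
  | nil => simp at hL
  | cons a rest ih =>
    cases rest with
    | nil =>
      have := h a (by simp)
      simp [cfVal]; exact_mod_cast this
    | cons b r =>
      have ha : (1 : ℚ) ≤ a := by exact_mod_cast h a (by simp)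
      have hrest : 1 ≤ cfVal (b :: r) := ih (by simp) (fun x hx => h x (by simp [hx]))
      have : 0 < cfVal (b :: r) := lt_of_lt_of_le one_pos hrest
      calc (1 : ℚ) ≤ a := ha
        _ ≤ (a : ℚ) + 1 / cfVal (b :: r) := le_add_of_nonneg_right (by positivity)
        _ = cfVal (a :: b :: r) := rfl

lemma cfA_one_le (L : List ℕ) (h : ∀ x ∈ L, 1 ≤ x) (x : ℚ) (hx : 1 ≤ x) :
    1 ≤ cfA L x := by
  induction L with
  | nil => exact hx
  | cons a rest ih =>
    have ha : (1 : ℚ) ≤ a := by exact_mod_cast h a (by simp)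
    have hrest : 1 ≤ cfA rest x := ih (fun y hy => h y (by simp [hy]))
    have : 0 < cfA rest x := lt_of_lt_of_le one_pos hrest
    calc (1 : ℚ) ≤ a := ha
      _ ≤ (a : ℚ) + 1 / cfA rest x := le_add_of_nonneg_right (by positivity)
      _ = cfA (a :: rest) x := rfl

lemma key (L : List ℕ) (hL : L ≠ []) (h : ∀ a ∈ L.tail, 1 ≤ a) (x y : ℚ)
    (hx : 1 ≤ x) (hxy : x < y) :
    (cfVal L < cfA L y ∧ cfA L y < cfA L x) ∨
    (cfA L x < cfA L y ∧ cfA L y < cfVal L) := by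
  induction L with
  | nil => simp at hL
  | cons a rest ih =>
    cases rest with
    | nil =>
      left
      have hx0 : 0 < x := lt_of_lt_of_le one_pos hx
      have hy0 : 0 < y := lt_trans hx0 hxy
      constructor
      · show (a : ℚ) < a + 1 / y
        have : (0 : ℚ) < 1 / y := by positivity
        linarith
      · show (a : ℚ) + 1 / y < (a : ℚ) + 1 / x
        have := one_div_lt_one_div_of_lt hx0 hxy
        linarith
    | cons b r =>
      have hall : ∀ z ∈ b :: r, 1 ≤ z := h
      have htail : ∀ z ∈ (b :: r).tail, 1 ≤ z := fun z hz => hall z (by simp [List.mem_of_mem_tail hz])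
      have hM := ih (by simp) htail
      have hy : 1 ≤ y := le_of_lt (lt_of_le_of_lt hx hxy)
      have hv : 1 ≤ cfVal (b :: r) := cfVal_one_le _ (by simp) hall
      have hAx : 1 ≤ cfA (b :: r) x := cfA_one_le _ hall x hx
      have hAy : 1 ≤ cfA (b :: r) y := cfA_one_le _ hall y hy
      have hv0 : 0 < cfVal (b :: r) := lt_of_lt_of_le one_pos hv
      have hAx0 : 0 < cfA (b :: r) x := lt_of_lt_of_le one_pos hAx
      have hAy0 : 0 < cfA (b :: r) y := lt_of_lt_of_le one_pos hAy
      have e1 : cfVal (a :: b :: r) = (a : ℚ) + 1 / cfVal (b :: r) := rfl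
      have e2 : cfA (a :: b :: r) x = (a : ℚ) + 1 / cfA (b :: r) x := rfl
      have e3 : cfA (a :: b :: r) y = (a : ℚ) + 1 / cfA (b :: r) y := rfl
      rcases hM with ⟨h1, h2⟩ | ⟨h1, h2⟩
      · right
        rw [e1, e2, e3]
        have i1 := one_div_lt_one_div_of_lt hv0 h1
        have i2 := one_div_lt_one_div_of_lt hAy0 h2
        constructor <;> linarith
      · left
        rw [e1, e2, e3]
        have i1 := one_div_lt_one_div_of_lt hAx0 h1
        have i2 := one_div_lt_one_div_of_lt hAy0 h2
        constructor <;> linarith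

/-- If `α` and `β` are related positive rationals with `α < β`, then
`α < α ∗ β < β`. (Here `γ = α ∗ β` is expressed via a convolution witness.) -/
theorem conv_strictly_between (α β γ : ℚ) (hα : 0 < α) (hβ : 0 < β)
    (h : ConvWitness α β γ) (hlt : α < β) :
    α < γ ∧ γ < β := by
  obtain ⟨L, n, hn, hor, hγ⟩ := h
  have hn1 : (1 : ℚ) ≤ (n : ℚ) := by exact_mod_cast hn
  have hγ' : cfA L ((n : ℚ) + 1) = γ := by
    rw [← hγ, cfA_eq L (n + 1)]
    norm_cast
  have hlt' : (n : ℚ) < (n : ℚ) + 1 := by linarith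
  rcases hor with ⟨⟨hne, htail, hval⟩, hβval⟩ | ⟨⟨hne, htail, hval⟩, hαval⟩
  · rw [cfA_eq] at hβval
    have := key L hne htail (n : ℚ) ((n : ℚ) + 1) hn1 hlt'
    rw [hval, hβval, hγ'] at this
    rcases this with ⟨h1, h2⟩ | ⟨h1, h2⟩
    · exact ⟨h1, h2⟩
    · exact absurd hlt (by linarith)
  · rw [cfA_eq] at hαval
    have := key L hne htail (n : ℚ) ((n : ℚ) + 1) hn1 hlt'
    rw [hval, hαval, hγ'] at this
    rcases this with ⟨h1, h2⟩ | ⟨h1, h2⟩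
    · exact absurd hlt (by linarith)
    · exact ⟨h1, h2⟩

end ResolutionGraph
end

section
/- Let α, ᾱ ∈ ℂ[[t]] both have nonzero constant term, and let β, β̄ ∈ ℂ[[w]] be the unique power series with (w·β(w))·α(w·β(w)) = w and (w·β̄(w))·ᾱ(w·β̄(w)) = w. Let i ≥ 0 be an integer. If the coefficients of α and ᾱ agree in all degrees ≤ i but their coefficients in degree i+1 differ, then the coefficients of β and β̄ in degree i+1 also differ (i.e. β_{i+1} ≠ β̄_{i+1}). -/
namespace ResolutionGraph

/-- Substitution `f(g(w))` of a power series `g` with zero constant term into a power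
series `f = Σ_i f_i tⁱ` : the coefficient of degree `n` of `f(g(w))` is
`∑_{i ≤ n} f_i · (coefficient of wⁿ in g(w)ⁱ)` (a finite sum, which for `g` with zero
constant term agrees with the usual substitution of power series). -/
noncomputable def psComp (f g : PowerSeries ℂ) : PowerSeries ℂ :=
  PowerSeries.mk fun n =>
    ∑ i ∈ Finset.range (n + 1), (PowerSeries.coeff i f) * (PowerSeries.coeff n (g ^ i))

open PowerSeries Finset in
/-- Key coefficient formula for `(X·β)·(α ∘ (X·β))`. -/
lemma keysum (α β : PowerSeries ℂ) (m : ℕ) :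
    PowerSeries.coeff (m + 1) ((PowerSeries.X * β) * psComp α (PowerSeries.X * β)) =
      ∑ j ∈ Finset.range (m + 1),
        PowerSeries.coeff j α * PowerSeries.coeff (m - j) (β ^ (j + 1)) := by
  rw [mul_assoc, coeff_succ_X_mul, coeff_mul]
  simp only [psComp, coeff_mk]
  have step1 : ∀ p ∈ antidiagonal m,
      coeff p.1 β * ∑ j ∈ range (p.2 + 1), coeff j α * coeff p.2 ((X * β) ^ j)
        = ∑ j ∈ range (m + 1),
            coeff j α * (coeff p.1 β * coeff p.2 ((X * β) ^ j)) := by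
    intro p hp
    rw [Finset.mul_sum]
    rw [Finset.sum_subset (Finset.range_subset_range.mpr
      (by have := Finset.HasAntidiagonal.mem_antidiagonal.mp hp; omega : p.2 + 1 ≤ m + 1))]
    · exact Finset.sum_congr rfl fun j _ => by ring
    · intro j _ hj2
      have hlt : p.2 < j := by simpa using hj2
      rw [mul_pow, coeff_X_pow_mul', if_neg (by omega)]
      ring
  rw [Finset.sum_congr rfl step1, Finset.sum_comm]
  refine Finset.sum_congr rfl fun j hj => ?_
  rw [← Finset.mul_sum]
  congr 1
  have h1 : β * (X * β) ^ j = X ^ j * β ^ (j + 1) := by rw [mul_pow]; ring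
  have h2 : (∑ p ∈ antidiagonal m, coeff p.1 β * coeff p.2 ((X * β) ^ j))
      = coeff m (β * (X * β) ^ j) := (coeff_mul _ _ _).symm
  rw [h2, h1, coeff_X_pow_mul', if_pos (by simpa using Nat.lt_succ_iff.mp (mem_range.mp hj))]

open PowerSeries Finset in
lemma pow_coeff_agree {β β' : PowerSeries ℂ} {k : ℕ}
    (h : ∀ m ≤ k, PowerSeries.coeff m β = PowerSeries.coeff m β') (p : ℕ) :
    ∀ m ≤ k, PowerSeries.coeff m (β ^ p) = PowerSeries.coeff m (β' ^ p) := by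
  induction p with
  | zero => intro m _; simp
  | succ p ih =>
    intro m hm
    rw [pow_succ, pow_succ, coeff_mul, coeff_mul]
    refine Finset.sum_congr rfl fun q hq => ?_
    have hq1 : q.1 ≤ m := Nat.le.intro (Finset.HasAntidiagonal.mem_antidiagonal.mp hq)
    have hq2 : q.2 ≤ m := by
      have := Finset.HasAntidiagonal.mem_antidiagonal.mp hq; omega
    rw [ih q.1 (hq1.trans hm), h q.2 (hq2.trans hm)]

/-- Let `α, ᾱ ∈ ℂ⟦t⟧` both have nonzero constant term, and let
`β, β̄ ∈ ℂ⟦w⟧` be the unique power series with `(w·β(w))·α(w·β(w)) = w` and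
`(w·β̄(w))·ᾱ(w·β̄(w)) = w`. If the coefficients of `α` and `ᾱ` agree in all degrees `≤ i`
but differ in degree `i + 1`, then `β_{i+1} ≠ β̄_{i+1}`. -/
theorem reversion_coeff_separation (α α' β β' : PowerSeries ℂ)
    (hα : PowerSeries.constantCoeff α ≠ 0)
    (hα' : PowerSeries.constantCoeff α' ≠ 0)
    (hβ : (PowerSeries.X * β) * psComp α (PowerSeries.X * β) = PowerSeries.X)
    (hβ' : (PowerSeries.X * β') * psComp α' (PowerSeries.X * β') = PowerSeries.X)
    (i : ℕ)
    (hagree : ∀ n ≤ i, PowerSeries.coeff n α = PowerSeries.coeff n α')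
    (hdiff : PowerSeries.coeff (i + 1) α ≠ PowerSeries.coeff (i + 1) α') :
    PowerSeries.coeff (i + 1) β ≠ PowerSeries.coeff (i + 1) β' := by
  classical
  have R : ∀ m : ℕ, (∑ j ∈ Finset.range (m + 1),
      PowerSeries.coeff j α * PowerSeries.coeff (m - j) (β ^ (j + 1)))
      = if m = 0 then 1 else 0 := by
    intro m
    rw [← keysum, hβ, PowerSeries.coeff_X]
    by_cases h : m = 0 <;> simp [h]
  have R' : ∀ m : ℕ, (∑ j ∈ Finset.range (m + 1),
      PowerSeries.coeff j α' * PowerSeries.coeff (m - j) (β' ^ (j + 1)))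
      = if m = 0 then 1 else 0 := by
    intro m
    rw [← keysum, hβ', PowerSeries.coeff_X]
    by_cases h : m = 0 <;> simp [h]
  -- β₀ ≠ 0
  have hα0 : PowerSeries.coeff 0 α ≠ 0 := by
    rwa [PowerSeries.coeff_zero_eq_constantCoeff]
  have hβ0 : PowerSeries.coeff 0 β ≠ 0 := by
    intro h
    rw [PowerSeries.coeff_zero_eq_constantCoeff] at h
    have h00 := R 0
    simp [h] at h00
  -- β and β' agree up to degree i
  have hagreeβ : ∀ m ≤ i, PowerSeries.coeff m β = PowerSeries.coeff m β' := by
    intro m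
    induction m using Nat.strong_induction_on with
    | _ m ih =>
      intro hmi
      have hsub : (∑ j ∈ Finset.range (m + 1),
          (PowerSeries.coeff j α * PowerSeries.coeff (m - j) (β ^ (j + 1)) -
            PowerSeries.coeff j α' * PowerSeries.coeff (m - j) (β' ^ (j + 1)))) = 0 := by
        rw [Finset.sum_sub_distrib, R m, R' m, sub_self]
      rw [Finset.sum_eq_single 0] at hsub
      · simp only [Nat.sub_zero, zero_add, pow_one] at hsub
        rw [hagree 0 (by omega), ← mul_sub] at hsub
        have hα'0 : PowerSeries.coeff 0 α' ≠ 0 := by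
          rwa [PowerSeries.coeff_zero_eq_constantCoeff]
        rcases mul_eq_zero.mp hsub with h | h
        · exact absurd h hα'0
        · exact sub_eq_zero.mp h
      · intro j hj hj0
        have hjm : j ≤ m := Nat.lt_succ_iff.mp (Finset.mem_range.mp hj)
        have hαj : PowerSeries.coeff j α = PowerSeries.coeff j α' :=
          hagree j (hjm.trans hmi)
        have hIH : ∀ m' ≤ m - j, PowerSeries.coeff m' β = PowerSeries.coeff m' β' :=
          fun m' hm' => ih m' (by omega) (by omega)
        have hpow : PowerSeries.coeff (m - j) (β ^ (j + 1)) =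
            PowerSeries.coeff (m - j) (β' ^ (j + 1)) :=
          pow_coeff_agree hIH (j + 1) (m - j) le_rfl
        rw [hαj, hpow, sub_self]
      · intro h; exact absurd (Finset.mem_range.mpr (by omega)) h
  -- now the separation at degree i+1
  intro heq
  have hagreeβ' : ∀ m ≤ i + 1, PowerSeries.coeff m β = PowerSeries.coeff m β' := by
    intro m hm
    rcases Nat.lt_succ_iff_lt_or_eq.mp (Nat.lt_succ_of_le hm) with h | h
    · exact hagreeβ m (by omega)
    · rw [h]; exact heq
  have hsub : (∑ j ∈ Finset.range (i + 2),
      (PowerSeries.coeff j α - PowerSeries.coeff j α') *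
        PowerSeries.coeff (i + 1 - j) (β ^ (j + 1))) = 0 := by
    have e : ∀ j ∈ Finset.range (i + 2),
        (PowerSeries.coeff j α - PowerSeries.coeff j α') *
          PowerSeries.coeff (i + 1 - j) (β ^ (j + 1))
        = PowerSeries.coeff j α * PowerSeries.coeff (i + 1 - j) (β ^ (j + 1)) -
          PowerSeries.coeff j α' * PowerSeries.coeff (i + 1 - j) (β' ^ (j + 1)) := by
      intro j hj
      have hpow : PowerSeries.coeff (i + 1 - j) (β ^ (j + 1)) =
          PowerSeries.coeff (i + 1 - j) (β' ^ (j + 1)) :=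
        pow_coeff_agree hagreeβ' (j + 1) (i + 1 - j) (by omega)
      rw [sub_mul, hpow]
    rw [Finset.sum_congr rfl e, Finset.sum_sub_distrib, R (i + 1), R' (i + 1), sub_self]
  rw [Finset.sum_eq_single (i + 1)] at hsub
  · simp only [Nat.sub_self] at hsub
    have hβ0pow : PowerSeries.coeff 0 (β ^ (i + 2)) ≠ 0 := by
      rw [PowerSeries.coeff_zero_eq_constantCoeff, map_pow]
      exact pow_ne_zero _ (by rwa [← PowerSeries.coeff_zero_eq_constantCoeff_apply])
    rcases mul_eq_zero.mp hsub with h | h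
    · exact hdiff (sub_eq_zero.mp h)
    · exact hβ0pow h
  · intro j hj hjne
    have hjle : j ≤ i := by
      have := Finset.mem_range.mp hj; omega
    rw [hagree j hjle, sub_self, zero_mul]
  · intro h; exact absurd (Finset.mem_range.mpr (by omega)) h

end ResolutionGraph
end
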